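/- arXiv:2406.00812 — 4 statements merged into one kernel-verified Lean document; each statement's English description precedes it below -/
import Mathlib

section
/- Let f : ℝⁿ → ℝ be a convex function that is L-Lipschitz for some L ≥ 0. Then the Gaussian smoothing J(μ, A) := ∫ f(μ + A z) dγⁿ(z) is jointly convex as a function of (μ, A) ∈ ℝⁿ × (n×n real matrices): for all μ₁, μ₂ ∈ ℝⁿ, all n×n real matrices A₁, A₂, and all λ ∈ [0,1], J(λμ₁ + (1−λ)μ₂, λA₁ + (1−λ)A₂) ≤ λ J(μ₁, A₁) + (1−λ) J(μ₂, A₂). -/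
/-!
Pointwise in `z`, the map `(μ, A) ↦ f (μ + A z)` is `f` composed with a linear map, hence convex,
and integrating a family of convex functions preserves convexity. The Lipschitz bound gives
`|f x| ≤ |f 0| + K ‖x‖`, and a standard Gaussian vector has finite first moment, so every
integrand is integrable.
-/

open Matrix MeasureTheory ProbabilityTheory Set

theorem LipschitzWith.integrable_comp {α E F : Type*} [MeasurableSpace α] {μ : Measure α}
    [IsFiniteMeasure μ] [NormedAddCommGroup E] [NormedAddCommGroup F] {K : NNReal} {g : E → F}
    (hg : LipschitzWith K g) {f : α → E} (hf : Integrable f μ) : Integrable (g ∘ f) μ := by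
  have hg₀ : LipschitzWith (K + 0) (fun x => g x - g 0) := hg.sub (LipschitzWith.const (g 0))
  have : Integrable ((fun x => g x - g 0) ∘ f) μ :=
    memLp_one_iff_integrable.1 (hg₀.comp_memLp (sub_self _) (memLp_one_iff_integrable.2 hf))
  refine (this.add (integrable_const (g 0))).congr (ae_of_all _ fun x => ?_)
  simp

theorem integrable_id_pi {ι : Type*} [Fintype ι] {μ : ι → Measure ℝ}
    [∀ i, IsProbabilityMeasure (μ i)] (h : ∀ i, Integrable id (μ i)) :
    Integrable id (Measure.pi μ) :=
  integrable_pi_iff.2 fun i =>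
    ((measurePreserving_eval μ i).integrable_comp aestronglyMeasurable_id).2 (h i)

theorem exists_lipschitzWith_of_abs_sub_le_mul_euclidean {ι : Type*} [Fintype ι]
    {f : (ι → ℝ) → ℝ} {L : ℝ}
    (hf : ∀ x y : ι → ℝ, |f x - f y| ≤ L * Real.sqrt (∑ i, (x i - y i) ^ 2)) :
    ∃ K, LipschitzWith K f := by
  have hg : LipschitzWith L.toNNReal (fun x : EuclideanSpace ℝ ι => f x.ofLp) := by
    refine LipschitzWith.of_dist_le_mul fun x y => ?_
    rw [Real.dist_eq, EuclideanSpace.dist_eq]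
    simp only [Real.dist_eq, sq_abs]
    exact (hf _ _).trans (mul_le_mul_of_nonneg_right (Real.le_coe_toNNReal L) (Real.sqrt_nonneg _))
  exact ⟨_, hg.comp (PiLp.lipschitzWith_toLp 2 fun _ => ℝ)⟩

theorem convexOn_integral {E α : Type*} [AddCommGroup E] [Module ℝ E] [MeasurableSpace α]
    {ν : Measure α} {F : E → α → ℝ} (hF : ∀ z, ConvexOn ℝ univ (F · z))
    (hint : ∀ p, Integrable (F p) ν) : ConvexOn ℝ univ (fun p => ∫ z, F p z ∂ν) := by
  refine ⟨convex_univ, fun p _ q _ a b ha hb hab => ?_⟩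
  calc ∫ z, F (a • p + b • q) z ∂ν ≤ ∫ z, a * F p z + b * F q z ∂ν :=
        integral_mono (hint _) (((hint p).const_mul a).add ((hint q).const_mul b))
          fun z => (hF z).2 (mem_univ p) (mem_univ q) ha hb hab
    _ = a * ∫ z, F p z ∂ν + b * ∫ z, F q z ∂ν := by
        rw [integral_add ((hint p).const_mul a) ((hint q).const_mul b), integral_const_mul,
          integral_const_mul]

theorem ConvexOn.comp_add_mulVec {m n : Type*} [Fintype n] {f : (m → ℝ) → ℝ}
    (hf : ConvexOn ℝ univ f) (z : n → ℝ) :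
    ConvexOn ℝ univ (fun p : (m → ℝ) × Matrix m n ℝ => f (p.1 + p.2 *ᵥ z)) :=
  hf.comp_linearMap
    { toFun := fun p : (m → ℝ) × Matrix m n ℝ => p.1 + p.2 *ᵥ z
      map_add' := fun p q => by simp only [Prod.fst_add, Prod.snd_add, add_mulVec]; abel
      map_smul' := fun c p => by simp [smul_mulVec, smul_add] }

theorem LipschitzWith.integrable_comp_add_mulVec {m n : Type*} [Fintype m] [Fintype n]
    {K : NNReal} {f : (m → ℝ) → ℝ} (hf : LipschitzWith K f)
    {ν : Measure (n → ℝ)} [IsFiniteMeasure ν]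
    (hν : Integrable id ν) (μ : m → ℝ) (A : Matrix m n ℝ) :
    Integrable (fun z => f (μ + A *ᵥ z)) ν :=
  hf.integrable_comp
    ((integrable_const μ).add ((LinearMap.toContinuousLinearMap A.mulVecLin).integrable_comp hν))

theorem stmt_1_general {n : ℕ} (f : (Fin n → ℝ) → ℝ) (L : ℝ)
    (hconv : ConvexOn ℝ Set.univ f)
    (hlip : ∀ x y : Fin n → ℝ, |f x - f y| ≤ L * Real.sqrt (∑ i, (x i - y i) ^ 2))
    (μ₁ μ₂ : Fin n → ℝ) (A₁ A₂ : Matrix (Fin n) (Fin n) ℝ)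
    (l : ℝ) (hl0 : 0 ≤ l) (hl1 : l ≤ 1) :
    (∫ z, f ((l • μ₁ + (1 - l) • μ₂) + (l • A₁ + (1 - l) • A₂).mulVec z)
        ∂(Measure.pi fun _ : Fin n => gaussianReal 0 1)) ≤
      l * (∫ z, f (μ₁ + A₁.mulVec z) ∂(Measure.pi fun _ : Fin n => gaussianReal 0 1)) +
        (1 - l) * (∫ z, f (μ₂ + A₂.mulVec z) ∂(Measure.pi fun _ : Fin n => gaussianReal 0 1)) := by
  obtain ⟨K, hK⟩ := exists_lipschitzWith_of_abs_sub_le_mul_euclidean hlip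
  have hγ : Integrable id (Measure.pi fun _ : Fin n => gaussianReal 0 1) :=
    integrable_id_pi fun _ => IsGaussian.integrable_id
  have hJ := convexOn_integral hconv.comp_add_mulVec
    fun p => hK.integrable_comp_add_mulVec hγ p.1 p.2
  simpa using hJ.2 (mem_univ (μ₁, A₁)) (mem_univ (μ₂, A₂)) hl0 (sub_nonneg.2 hl1) (by ring)

/-- Gaussian smoothing `J(μ, A) = ∫ f(μ + A z) dγⁿ(z)` of a convex `L`-Lipschitz
function `f` is jointly convex in `(μ, A)`. -/
theorem stmt_1 {n : ℕ} (f : (Fin n → ℝ) → ℝ) (L : ℝ) (hL : 0 ≤ L)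
    (hconv : ConvexOn ℝ Set.univ f)
    (hlip : ∀ x y : Fin n → ℝ, |f x - f y| ≤ L * Real.sqrt (∑ i, (x i - y i) ^ 2))
    (μ₁ μ₂ : Fin n → ℝ) (A₁ A₂ : Matrix (Fin n) (Fin n) ℝ)
    (l : ℝ) (hl0 : 0 ≤ l) (hl1 : l ≤ 1) :
    (∫ z, f ((l • μ₁ + (1 - l) • μ₂) + (l • A₁ + (1 - l) • A₂).mulVec z)
        ∂(Measure.pi fun _ : Fin n => gaussianReal 0 1)) ≤
      l * (∫ z, f (μ₁ + A₁.mulVec z) ∂(Measure.pi fun _ : Fin n => gaussianReal 0 1)) +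
        (1 - l) * (∫ z, f (μ₂ + A₂.mulVec z) ∂(Measure.pi fun _ : Fin n => gaussianReal 0 1)) :=
  stmt_1_general f L hconv hlip μ₁ μ₂ A₁ A₂ l hl0 hl1
end

section
/- Let f : ℝⁿ → ℝ be L-Lipschitz, let A be an n×n real matrix, and let μ ∈ ℝⁿ. Then |∫ (‖z‖₂² − n)·(f(μ + A z) − f(μ)) dγⁿ(z)| ≤ √2 · L · ‖A‖₂ · n. -/
/-!
Lipschitz continuity and `‖A z‖₂ ≤ ‖A‖₂ ‖z‖₂` bound the integrand by `L ‖A‖₂ |‖z‖² - n| ‖z‖`,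
and the weighted AM-GM inequality `2 a b ≤ a² / √2 + √2 b²` reduces the claim to the moments
`E ‖z‖² = n` and `E (‖z‖² - n)² = Var ‖z‖² = 2n` of the chi-squared distribution. The variance
is the sum of the variances `Var z_i² = E z_i⁴ - 1 = 2` of the independent coordinates, and the
fourth moment `3` is read off the fourth derivative of the moment generating function `exp (t²/2)`.
-/

open Matrix MeasureTheory ProbabilityTheory
open scoped Matrix.Norms.L2Operator

open Real
open scoped NNReal

section GaussianMoments

variable {μ : ℝ} {v : ℝ≥0}

lemma integrable_pow_gaussianReal (k : ℕ) : Integrable (fun x ↦ x ^ k) (gaussianReal μ v) :=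
  (memLp_id_gaussianReal k).integrable_norm_pow'.mono' (by fun_prop) <|
    ae_of_all _ fun x ↦ by simp

lemma memLp_sq_gaussianReal : MemLp (fun x ↦ x ^ 2) 2 (gaussianReal μ v) :=
  (memLp_two_iff_integrable_sq (by fun_prop)).2 <| by
    simpa only [← pow_mul] using integrable_pow_gaussianReal (μ := μ) (v := v) 4

lemma integral_sq_gaussianReal_zero : ∫ x, x ^ 2 ∂gaussianReal 0 v = v := by
  rw [← variance_fun_id_gaussianReal (μ := 0) (v := v),
    variance_of_integral_eq_zero aemeasurable_id' integral_id_gaussianReal]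

lemma hasDerivAt_mul_exp_mul_sq_div_two {p : ℝ → ℝ} {p' c t : ℝ} (hp : HasDerivAt p p' t) :
    HasDerivAt (fun t ↦ p t * rexp (c * t ^ 2 / 2))
      ((p' + c * t * p t) * rexp (c * t ^ 2 / 2)) t :=
  (hp.mul ((((hasDerivAt_pow 2 t).const_mul c).div_const 2).exp)).congr_deriv
    (by push_cast; ring)

lemma iteratedDeriv_four_exp_mul_sq_div_two (c : ℝ) :
    iteratedDeriv 4 (fun t ↦ rexp (c * t ^ 2 / 2)) =
      fun t ↦ (3 * c ^ 2 + 6 * c ^ 3 * t ^ 2 + c ^ 4 * t ^ 4) * rexp (c * t ^ 2 / 2) := by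
  have d1 : deriv (fun t ↦ rexp (c * t ^ 2 / 2)) = fun t ↦ c * t * rexp (c * t ^ 2 / 2) := by
    ext t
    simpa using (hasDerivAt_mul_exp_mul_sq_div_two (c := c) (hasDerivAt_const t 1)).deriv
  have d2 : deriv (fun t ↦ c * t * rexp (c * t ^ 2 / 2)) =
      fun t ↦ (c + c ^ 2 * t ^ 2) * rexp (c * t ^ 2 / 2) := by
    ext t
    exact ((hasDerivAt_mul_exp_mul_sq_div_two ((hasDerivAt_id t).const_mul c)).congr_deriv
      (by simp only [id, mul_one]; ring)).deriv
  have d3 : deriv (fun t ↦ (c + c ^ 2 * t ^ 2) * rexp (c * t ^ 2 / 2)) =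
      fun t ↦ (3 * c ^ 2 * t + c ^ 3 * t ^ 3) * rexp (c * t ^ 2 / 2) := by
    ext t
    exact ((hasDerivAt_mul_exp_mul_sq_div_two (((hasDerivAt_pow 2 t).const_mul (c ^ 2)).const_add
      c)).congr_deriv (by push_cast; ring)).deriv
  have d4 : deriv (fun t ↦ (3 * c ^ 2 * t + c ^ 3 * t ^ 3) * rexp (c * t ^ 2 / 2)) =
      fun t ↦ (3 * c ^ 2 + 6 * c ^ 3 * t ^ 2 + c ^ 4 * t ^ 4) * rexp (c * t ^ 2 / 2) := by
    ext t
    exact ((hasDerivAt_mul_exp_mul_sq_div_two (((hasDerivAt_id t).const_mul (3 * c ^ 2)).add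
      ((hasDerivAt_pow 3 t).const_mul (c ^ 3)))).congr_deriv
        (by simp only [Pi.add_apply, id]; push_cast; ring)).deriv
  simp only [iteratedDeriv_succ, iteratedDeriv_zero, d1, d2, d3, d4]

lemma integral_pow_four_gaussianReal_zero : ∫ x, x ^ 4 ∂gaussianReal 0 v = 3 * v ^ 2 := by
  have h := iteratedDeriv_mgf_zero (X := fun x ↦ x) (μ := gaussianReal 0 v) (by simp) 4
  simp only [mgf_fun_id_gaussianReal, zero_mul, zero_add,
    iteratedDeriv_four_exp_mul_sq_div_two] at h
  simpa using h.symm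

lemma variance_sq_gaussianReal_zero : Var[fun x ↦ x ^ 2; gaussianReal 0 v] = 2 * v ^ 2 := by
  rw [variance_eq_sub memLp_sq_gaussianReal]
  simp only [Pi.pow_apply, ← pow_mul, integral_pow_four_gaussianReal_zero,
    integral_sq_gaussianReal_zero]
  ring

end GaussianMoments

section StandardGaussianPi

variable {ι : Type*} [Fintype ι] {v : ℝ≥0}

lemma memLp_sq_eval_pi_gaussianReal (i : ι) :
    MemLp (fun z : ι → ℝ ↦ z i ^ 2) 2 (Measure.pi fun _ ↦ gaussianReal 0 v) :=
  memLp_sq_gaussianReal.comp_measurePreserving (measurePreserving_eval _ i)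

lemma memLp_sum_sq_pi_gaussianReal :
    MemLp (fun z : ι → ℝ ↦ ∑ i, z i ^ 2) 2 (Measure.pi fun _ ↦ gaussianReal 0 v) :=
  memLp_finsetSum _ fun i _ ↦ memLp_sq_eval_pi_gaussianReal i

lemma integral_sum_sq_pi_gaussianReal :
    ∫ z, ∑ i, z i ^ 2 ∂(Measure.pi fun _ : ι ↦ gaussianReal 0 v) = Fintype.card ι * v := by
  rw [integral_finsetSum _ fun i _ ↦ (memLp_sq_eval_pi_gaussianReal i).integrable one_le_two]
  simp [integral_comp_eval (X := fun _ : ι ↦ ℝ) (f := fun x ↦ x ^ 2) (by fun_prop),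
    integral_sq_gaussianReal_zero]

lemma integral_sum_sq_sub_sq_pi_gaussianReal :
    ∫ z, (∑ i, z i ^ 2 - Fintype.card ι * v) ^ 2 ∂(Measure.pi fun _ : ι ↦ gaussianReal 0 v) =
      2 * Fintype.card ι * v ^ 2 := by
  have h := variance_sum_pi (μ := fun _ : ι ↦ gaussianReal 0 v) (X := fun _ x ↦ x ^ 2)
    fun _ ↦ memLp_sq_gaussianReal
  rw [variance_eq_integral (by fun_prop)] at h
  simp only [Finset.sum_apply, integral_sum_sq_pi_gaussianReal, variance_sq_gaussianReal_zero] at h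
  rw [h, Finset.sum_const, Finset.card_univ, nsmul_eq_mul]
  ring

end StandardGaussianPi

lemma sqrt_sum_sq_mulVec_le {m n : Type*} [Fintype m] [Fintype n] [DecidableEq n]
    (A : Matrix m n ℝ) (z : n → ℝ) :
    √(∑ i, (A *ᵥ z) i ^ 2) ≤ ‖A‖ * √(∑ j, z j ^ 2) := by
  simpa [EuclideanSpace.norm_eq] using l2_opNorm_mulVec A (WithLp.toLp 2 z)

lemma abs_sub_le_of_lipschitz_of_mulVec {n : Type*} [Fintype n] [DecidableEq n]
    {f : (n → ℝ) → ℝ} {L : ℝ} (hL : 0 ≤ L)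
    (hlip : ∀ x y : n → ℝ, |f x - f y| ≤ L * √(∑ i, (x i - y i) ^ 2))
    (A : Matrix n n ℝ) (μ z : n → ℝ) :
    |f (μ + A *ᵥ z) - f μ| ≤ L * ‖A‖ * √(∑ i, z i ^ 2) :=
  calc |f (μ + A *ᵥ z) - f μ| ≤ L * √(∑ i, (A *ᵥ z) i ^ 2) := by
        simpa using hlip (μ + A *ᵥ z) μ
    _ ≤ L * (‖A‖ * √(∑ i, z i ^ 2)) := by gcongr; exact sqrt_sum_sq_mulVec_le A z
    _ = L * ‖A‖ * √(∑ i, z i ^ 2) := by ring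

lemma abs_mul_le_of_abs_le_mul {x y r K ε : ℝ} (hK : 0 ≤ K) (hε : 0 < ε) (hy : |y| ≤ K * r) :
    |x * y| ≤ K / 2 * (ε * x ^ 2 + ε⁻¹ * r ^ 2) :=
  calc |x * y| = |x| * |y| := abs_mul x y
    _ ≤ |x| * (K * r) := by gcongr
    _ = K / 2 * (2 * |x| * r) := by ring
    _ ≤ K / 2 * (ε * |x| ^ 2 + ε⁻¹ * r ^ 2) := by gcongr; exact two_mul_le_add_mul_sq hε
    _ = K / 2 * (ε * x ^ 2 + ε⁻¹ * r ^ 2) := by rw [sq_abs]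

/-- For `L`-Lipschitz `f`, matrix `A`, and `μ ∈ ℝⁿ`,
`|∫ (‖z‖₂² − n)(f(μ + A z) − f(μ)) dγⁿ(z)| ≤ √2 L ‖A‖₂ n` with `‖A‖₂` the spectral norm. -/
theorem stmt_10 {n : ℕ} (f : (Fin n → ℝ) → ℝ) (L : ℝ) (hL : 0 ≤ L)
    (hlip : ∀ x y : Fin n → ℝ, |f x - f y| ≤ L * Real.sqrt (∑ i, (x i - y i) ^ 2))
    (A : Matrix (Fin n) (Fin n) ℝ) (μ : Fin n → ℝ) :
    |∫ z, ((∑ i, z i ^ 2) - n) * (f (μ + A.mulVec z) - f μ)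
        ∂(Measure.pi fun _ : Fin n => gaussianReal 0 1)| ≤
      Real.sqrt 2 * L * ‖A‖ * n := by
  -- The weight `√2` balances `E (‖z‖² - n)² = 2n` against `E ‖z‖² = n`.
  have hbound (z : Fin n → ℝ) : ‖((∑ i, z i ^ 2) - n) * (f (μ + A *ᵥ z) - f μ)‖ ≤
      L * ‖A‖ / 2 * ((√2)⁻¹ * ((∑ i, z i ^ 2) - n) ^ 2 + √2 * ∑ i, z i ^ 2) := by
    simpa [sq_sqrt (by positivity : 0 ≤ ∑ i, z i ^ 2)] using
      abs_mul_le_of_abs_le_mul (mul_nonneg hL (norm_nonneg A)) (by positivity : 0 < (√2)⁻¹)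
        (abs_sub_le_of_lipschitz_of_mulVec hL hlip A μ z) (x := (∑ i, z i ^ 2) - n)
  have hS := memLp_sum_sq_pi_gaussianReal (ι := Fin n) (v := 1)
  have hX : Integrable (fun z : Fin n → ℝ ↦ ((∑ i, z i ^ 2) - n) ^ 2)
      (Measure.pi fun _ ↦ gaussianReal 0 1) := (hS.sub (memLp_const (n : ℝ))).integrable_sq
  have hmean := integral_sum_sq_pi_gaussianReal (ι := Fin n) (v := 1)
  have hvar := integral_sum_sq_sub_sq_pi_gaussianReal (ι := Fin n) (v := 1)
  simp only [Fintype.card_fin, NNReal.coe_one, mul_one, one_pow] at hmean hvar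
  rw [← Real.norm_eq_abs]
  refine (norm_integral_le_of_norm_le
    (((hX.const_mul _).fun_add ((hS.integrable one_le_two).const_mul _)).const_mul _)
    (ae_of_all _ hbound)).trans_eq ?_
  rw [integral_const_mul, integral_add (hX.const_mul _) ((hS.integrable one_le_two).const_mul _),
    integral_const_mul, integral_const_mul, hmean, hvar]
  field_simp
  linear_combination (-L * ‖A‖ * n) * sq_sqrt (zero_le_two : (0 : ℝ) ≤ 2)
end

section
/- Let Σ be a real positive definite n×n matrix, let β > 0 and γ ≥ 0 be reals, let ĝ, μ, μ* ∈ ℝⁿ, and define μ' := μ − β·Σ·(γμ + ĝ). Then ‖μ' − μ*‖²_{Σ⁻¹} ≤ ‖μ − μ*‖²_{Σ⁻¹} − 2β⟨ĝ, μ − μ*⟩ − βγ(‖μ − μ*‖₂² − ‖μ*‖₂² + ‖μ‖₂²) + 2β²·⟨ĝ, Σ ĝ⟩ + 2β²γ²·⟨μ, Σ μ⟩. -/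
open Matrix

/-! Write `μ' - μ* = (μ - μ*) - βΣh` with `h = γμ + ĝ`. The `Σ⁻¹`-norm expands exactly, `Σ⁻¹Σ`
cancelling in the cross term to `-2β⟨h, μ - μ*⟩`; the `γ`-part of that term is the polarization
`2⟨μ, μ - μ*⟩ = ‖μ - μ*‖² - ‖μ*‖² + ‖μ‖²`. The remaining `β²⟨h, Σh⟩` is at most
`2β²(γ²⟨μ, Σμ⟩ + ⟨ĝ, Σĝ⟩)` by the parallelogram law for the semidefinite form of `Σ`. -/

namespace Matrix

variable {n R : Type*} [Fintype n]

theorem IsSymm.dotProduct_mulVec_comm [CommSemiring R] {A : Matrix n n R} (hA : A.IsSymm)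
    (v w : n → R) : v ⬝ᵥ A *ᵥ w = w ⬝ᵥ A *ᵥ v := by
  rw [dotProduct_mulVec, ← mulVec_transpose, hA.eq, dotProduct_comm]

variable [CommRing R]

theorem IsSymm.mulVec_dotProduct_inv_mulVec [DecidableEq n] {A : Matrix n n R} (hA : A.IsSymm)
    (hdet : IsUnit A.det) (v w : n → R) : A *ᵥ v ⬝ᵥ A⁻¹ *ᵥ w = v ⬝ᵥ w := by
  rw [dotProduct_comm, hA.dotProduct_mulVec_comm, mulVec_mulVec, mul_nonsing_inv _ hdet,
    one_mulVec]

theorem IsSymm.dotProduct_inv_mulVec_sub_smul_mulVec [DecidableEq n] {A : Matrix n n R}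
    (hA : A.IsSymm) (hdet : IsUnit A.det) (c : R) (d h : n → R) :
    (d - c • A *ᵥ h) ⬝ᵥ A⁻¹ *ᵥ (d - c • A *ᵥ h) =
      d ⬝ᵥ A⁻¹ *ᵥ d - 2 * c * (h ⬝ᵥ d) + c ^ 2 * (h ⬝ᵥ A *ᵥ h) := by
  simp only [mulVec_sub, mulVec_smul, mulVec_mulVec, nonsing_inv_mul _ hdet, one_mulVec,
    sub_dotProduct, dotProduct_sub, smul_dotProduct, dotProduct_smul, smul_eq_mul,
    hA.mulVec_dotProduct_inv_mulVec hdet, dotProduct_comm d h, dotProduct_comm (A *ᵥ h) h]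
  ring

theorem sum_sub_sq_sub_sum_sq_add_sum_sq (x y : n → R) :
    ∑ i, (x i - y i) ^ 2 - ∑ i, y i ^ 2 + ∑ i, x i ^ 2 = 2 * (x ⬝ᵥ (x - y)) := by
  simp only [dotProduct, Pi.sub_apply, Finset.mul_sum, ← Finset.sum_sub_distrib,
    ← Finset.sum_add_distrib]
  exact Finset.sum_congr rfl fun i _ ↦ by ring

theorem PosSemidef.dotProduct_mulVec_add_le [LinearOrder R] [IsStrictOrderedRing R] [StarRing R]
    [TrivialStar R] {A : Matrix n n R} (hA : A.PosSemidef) (a b : n → R) :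
    (a + b) ⬝ᵥ A *ᵥ (a + b) ≤ 2 * (a ⬝ᵥ A *ᵥ a) + 2 * (b ⬝ᵥ A *ᵥ b) := by
  have hsymm : A.IsSymm := isHermitian_iff_isSymm.mp hA.isHermitian
  have hdiff : 0 ≤ (a - b) ⬝ᵥ A *ᵥ (a - b) := by simpa using hA.dotProduct_mulVec_nonneg (a - b)
  simp only [mulVec_add, mulVec_sub, add_dotProduct, dotProduct_add, sub_dotProduct,
    dotProduct_sub, hsymm.dotProduct_mulVec_comm b a] at hdiff ⊢
  linarith

end Matrix

theorem stmt_14_general {n : ℕ} (S : Matrix (Fin n) (Fin n) ℝ) (hS : S.PosDef)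
    (β γ : ℝ) (g μ μs : Fin n → ℝ) :
    (μ - β • S.mulVec (γ • μ + g) - μs) ⬝ᵥ S⁻¹.mulVec (μ - β • S.mulVec (γ • μ + g) - μs) ≤
      (μ - μs) ⬝ᵥ S⁻¹.mulVec (μ - μs) - 2 * β * (g ⬝ᵥ (μ - μs)) -
        β * γ * ((∑ i, (μ i - μs i) ^ 2) - (∑ i, μs i ^ 2) + ∑ i, μ i ^ 2) +
        2 * β ^ 2 * (g ⬝ᵥ S.mulVec g) + 2 * β ^ 2 * γ ^ 2 * (μ ⬝ᵥ S.mulVec μ) := by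
  have hsymm : S.IsSymm := isHermitian_iff_isSymm.mp hS.isHermitian
  have hdet : IsUnit S.det := (isUnit_iff_isUnit_det S).mp hS.isUnit
  have hsplit := hS.posSemidef.dotProduct_mulVec_add_le (γ • μ) g
  rw [sub_right_comm, hsymm.dotProduct_inv_mulVec_sub_smul_mulVec hdet,
    sum_sub_sq_sub_sum_sq_add_sum_sq]
  simp only [add_dotProduct, smul_dotProduct, mulVec_smul, dotProduct_smul, smul_eq_mul]
    at hsplit ⊢
  linarith [mul_le_mul_of_nonneg_left hsplit (sq_nonneg β)]

/-- One-step descent inequality for the regularized mean update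
`μ' = μ − β Σ (γ μ + ĝ)` of the CASBO algorithm: with positive definite `Σ`,
`‖μ' − μ*‖²_{Σ⁻¹} ≤ ‖μ − μ*‖²_{Σ⁻¹} − 2β⟨ĝ, μ − μ*⟩ − βγ(‖μ − μ*‖₂² − ‖μ*‖₂² + ‖μ‖₂²)
  + 2β²⟨ĝ, Σ ĝ⟩ + 2β²γ²⟨μ, Σ μ⟩`. -/
theorem stmt_14 {n : ℕ} (S : Matrix (Fin n) (Fin n) ℝ) (hS : S.PosDef)
    (β γ : ℝ) (hβ : 0 < β) (hγ : 0 ≤ γ) (g μ μs : Fin n → ℝ) :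
    (μ - β • S.mulVec (γ • μ + g) - μs) ⬝ᵥ S⁻¹.mulVec (μ - β • S.mulVec (γ • μ + g) - μs) ≤
      (μ - μs) ⬝ᵥ S⁻¹.mulVec (μ - μs) - 2 * β * (g ⬝ᵥ (μ - μs)) -
        β * γ * ((∑ i, (μ i - μs i) ^ 2) - (∑ i, μs i ^ 2) + ∑ i, μ i ^ 2) +
        2 * β ^ 2 * (g ⬝ᵥ S.mulVec g) + 2 * β ^ 2 * γ ^ 2 * (μ ⬝ᵥ S.mulVec μ) :=
  stmt_14_general S hS β γ g μ μs
end

section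
/- Let Σ be a real positive definite n×n matrix and let H be a real symmetric n×n matrix. Let α_t, β_t, β_{t+1}, γ_t, ω_t be positive reals, and suppose H ≼ (1/α_t)·(β_{t+1}/β_t − ω_t)·I + (β_{t+1}·γ_t/α_t)·Σ. Define the updated inverse covariance M := Σ^{−1/2}·(ω_t·I + α_t·H)·Σ^{−1/2}, where Σ^{−1/2} is the inverse of the symmetric positive definite square root of Σ. Then (1/β_{t+1})·M − (1/β_t)·Σ⁻¹ − γ_t·I ≼ 0. -/
/-!
Multiplying the hypothesis by `α_t / β_{t+1} > 0` gives
`0 ≼ (1/β_t) I + γ_t Σ − (1/β_{t+1})(ω_t I + α_t H)`. Conjugating by the symmetric matrix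
`Σ^{−1/2}` preserves this, and sends `I` to `Σ⁻¹` and `Σ` to `I`, which is the claim.
-/

open Matrix

open scoped ComplexOrder

/-- The square root of a positive semidefinite matrix, as `Matrix.PosSemidef.sqrt` was defined
in the older Mathlib. -/
noncomputable def posSemidefSqrtOld {n 𝕜 : Type*} [Fintype n] [RCLike 𝕜] [DecidableEq n]
    {A : Matrix n n 𝕜} (hA : A.PosSemidef) : Matrix n n 𝕜 :=
  hA.1.eigenvectorUnitary.1 * diagonal ((↑) ∘ (Real.sqrt ∘ hA.1.eigenvalues)) *
    (star hA.1.eigenvectorUnitary : Matrix n n 𝕜)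

section posSemidefSqrtOld

variable {n 𝕜 : Type*} [Fintype n] [RCLike 𝕜] [DecidableEq n] {A : Matrix n n 𝕜}

theorem posSemidef_posSemidefSqrtOld (hA : A.PosSemidef) : (posSemidefSqrtOld hA).PosSemidef := by
  have hD : (diagonal ((↑) ∘ (Real.sqrt ∘ hA.1.eigenvalues)) : Matrix n n 𝕜).PosSemidef :=
    posSemidef_diagonal_iff.mpr fun _ => by simp
  simpa only [posSemidefSqrtOld, star_eq_conjTranspose]
    using hD.mul_mul_conjTranspose_same (hA.1.eigenvectorUnitary : Matrix n n 𝕜)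

theorem posSemidefSqrtOld_mul_self (hA : A.PosSemidef) :
    posSemidefSqrtOld hA * posSemidefSqrtOld hA = A := by
  rw [posSemidefSqrtOld]
  set U : Matrix n n 𝕜 := ↑hA.1.eigenvectorUnitary
  set D : Matrix n n 𝕜 := diagonal ((↑) ∘ (Real.sqrt ∘ hA.1.eigenvalues))
  have hUU : star U * U = 1 := Unitary.coe_star_mul_self _
  have hDD : D * D = diagonal ((↑) ∘ hA.1.eigenvalues) := by
    rw [diagonal_mul_diagonal]
    congr 1
    funext i
    simp [← RCLike.ofReal_mul, Real.mul_self_sqrt (hA.eigenvalues_nonneg i)]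
  calc U * D * star U * (U * D * star U) = U * (D * D) * star U := by
        simp only [Matrix.mul_assoc, ← Matrix.mul_assoc (star U) U, hUU, Matrix.one_mul]
    _ = A := by rw [hDD]; exact (hA.1.spectral_theorem).symm

end posSemidefSqrtOld

theorem inv_mul_smul_sub_mul_inv_of_mul_self {n R : Type*} [Fintype n] [DecidableEq n]
    [CommRing R] {Q S : Matrix n n R} (hQS : Q * Q = S) (hS : IsUnit S) (a b c : R) (X : Matrix n n R) :
    Q⁻¹ * (a • 1 + b • S - c • X) * Q⁻¹ = a • S⁻¹ + b • 1 - c • (Q⁻¹ * X * Q⁻¹) := by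
  have hQ : IsUnit Q.det := (isUnit_iff_isUnit_det Q).mp (isUnit_of_mul_isUnit_left (hQS ▸ hS))
  have hQSQ : Q⁻¹ * S * Q⁻¹ = 1 := by
    rw [← hQS, Matrix.mul_assoc, Matrix.mul_assoc, mul_nonsing_inv _ hQ, Matrix.mul_one,
      nonsing_inv_mul _ hQ]
  have hQQ : Q⁻¹ * Q⁻¹ = S⁻¹ := by rw [← Matrix.mul_inv_rev, hQS]
  simp only [Matrix.mul_sub, Matrix.sub_mul, Matrix.mul_add, Matrix.add_mul, Matrix.mul_smul,
    Matrix.smul_mul, Matrix.mul_one, hQQ, hQSQ]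

theorem stmt_16_general {n : ℕ} (S H : Matrix (Fin n) (Fin n) ℝ) (hS : S.PosDef)
    (αt βt βt1 γt ωt : ℝ)
    (hαt : 0 < αt) (hβt1 : 0 < βt1)
    (hcon : ((1 / αt * (βt1 / βt - ωt)) • (1 : Matrix (Fin n) (Fin n) ℝ) +
        (βt1 * γt / αt) • S - H).PosSemidef) :
    ((1 / βt) • S⁻¹ + γt • (1 : Matrix (Fin n) (Fin n) ℝ) -
        (1 / βt1) • ((posSemidefSqrtOld hS.posSemidef)⁻¹ *
          (ωt • (1 : Matrix (Fin n) (Fin n) ℝ) + αt • H) * (posSemidefSqrtOld hS.posSemidef)⁻¹)).PosSemidef := by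
  set Q := posSemidefSqrtOld hS.posSemidef
  have hQinv : Q⁻¹ᴴ = Q⁻¹ := (posSemidef_posSemidefSqrtOld hS.posSemidef).isHermitian.inv.eq
  have hscaled : (αt / βt1) • ((1 / αt * (βt1 / βt - ωt)) • (1 : Matrix (Fin n) (Fin n) ℝ) +
        (βt1 * γt / αt) • S - H) =
      (1 / βt) • 1 + γt • S - (1 / βt1) • (ωt • 1 + αt • H) := by
    match_scalars <;> field_simp
  have hconj := (hcon.smul (by positivity : 0 ≤ αt / βt1)).conjTranspose_mul_mul_same Q⁻¹
  rwa [hscaled, hQinv, inv_mul_smul_sub_mul_inv_of_mul_self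
    (posSemidefSqrtOld_mul_self hS.posSemidef) hS.isUnit] at hconj

/-- If `Σ` is positive definite, `H` is symmetric, and
`H ≼ (1/α_t)(β_{t+1}/β_t − ω_t) I + (β_{t+1}γ_t/α_t) Σ`, then the updated inverse
covariance `M = Σ^{−1/2}(ω_t I + α_t H)Σ^{−1/2}` (with `Σ^{1/2}` the symmetric positive
definite square root of `Σ`) satisfies `(1/β_{t+1}) M − (1/β_t) Σ⁻¹ − γ_t I ≼ 0`. -/
theorem stmt_16 {n : ℕ} (S H : Matrix (Fin n) (Fin n) ℝ) (hS : S.PosDef) (hH : H.IsSymm)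
    (αt βt βt1 γt ωt : ℝ)
    (hαt : 0 < αt) (hβt : 0 < βt) (hβt1 : 0 < βt1) (hγt : 0 < γt) (hωt : 0 < ωt)
    (hcon : ((1 / αt * (βt1 / βt - ωt)) • (1 : Matrix (Fin n) (Fin n) ℝ) +
        (βt1 * γt / αt) • S - H).PosSemidef) :
    ((1 / βt) • S⁻¹ + γt • (1 : Matrix (Fin n) (Fin n) ℝ) -
        (1 / βt1) • ((posSemidefSqrtOld hS.posSemidef)⁻¹ *
          (ωt • (1 : Matrix (Fin n) (Fin n) ℝ) + αt • H) * (posSemidefSqrtOld hS.posSemidef)⁻¹)).PosSemidef :=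
  stmt_16_general S H hS αt βt βt1 γt ωt hαt hβt1 hcon
end
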